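/- Assume there is no regulatory arbitrage at level γ (m ∈ ℝ^N, ∑mⁱ < γ ⟹ ∄ g ∈ G with Λ∘(m+g) ∈ A) and Assumption (A): for all n ∈ ℕ there exist z ≥ 0 and g ∈ G with Λ∘((γ/N + 1/n − n(Z−z)⁺)·𝟏 + g) ∈ A. Then ρ(0) = γ, where ρ(X) := inf{∑mⁱ | m ∈ ℝ^N, ∃g ∈ G, Λ∘(m+X+g) ∈ A}. -/

import Mathlib

/-!
Absence of regulatory arbitrage says exactly that every admissible capital allocation has total
at least `γ`, so `ρ(0) ≥ γ`. Conversely, Assumption (A) provides, for each `n`, an acceptable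
position `(γ/N + 1/n)·𝟏 - φ + g` with `φ ≥ 0`; by monotonicity of `Λ` and `A` the constant
allocation `(γ/N + 1/n)·𝟏` is admissible as well, so `ρ(0) ≤ γ + N/n` for every `n`.
-/

open scoped BigOperators

/-- The robust market-adjusted systemic risk measure
`ρ(X) = inf { ∑ᵢ mⁱ | m ∈ ℝ^N, ∃ g ∈ G, Λ∘(m+X+g) ∈ A }`, `inf ∅ = +∞`. -/
noncomputable def rho {Ω : Type*} {N : ℕ} (A : Set (Ω → ℝ)) (G : Set (Ω → Fin N → ℝ))
    (Λ : (Fin N → ℝ) → ℝ) (X : Ω → Fin N → ℝ) : EReal :=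
  sInf ((fun m : Fin N → ℝ => ((∑ i, m i : ℝ) : EReal)) ''
    {m | ∃ g ∈ G, (fun ω => Λ (fun i => m i + X ω i + g ω i)) ∈ A})

section RiskMeasure

variable {Ω : Type*} {N : ℕ} {A : Set (Ω → ℝ)} {G : Set (Ω → Fin N → ℝ)}
  {Λ : (Fin N → ℝ) → ℝ}

theorem rho_le_sum {X : Ω → Fin N → ℝ} {m : Fin N → ℝ} {g : Ω → Fin N → ℝ} (hg : g ∈ G)
    (hA : (fun ω => Λ (fun i => m i + X ω i + g ω i)) ∈ A) :
    rho A G Λ X ≤ ((∑ i, m i : ℝ) : EReal) :=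
  sInf_le ⟨m, ⟨g, hg, hA⟩, rfl⟩

theorem le_rho_zero_of_noArbitrage (γ : ℝ)
    (hnoarb : ∀ m : Fin N → ℝ, (∑ i, m i) < γ →
      ¬ ∃ g ∈ G, (fun ω => Λ (fun i => m i + g ω i)) ∈ A) :
    (γ : EReal) ≤ rho A G Λ 0 := by
  refine le_sInf ?_
  rintro _ ⟨m, ⟨g, hg, hA⟩, rfl⟩
  by_contra! hlt
  exact hnoarb m (EReal.coe_lt_coe_iff.1 hlt) ⟨g, hg, by simpa using hA⟩

theorem rho_zero_le_of_const_sub_nonneg_mem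
    (hAmono : ∀ x y : Ω → ℝ, y ∈ A → (∀ ω, y ω ≤ x ω) → x ∈ A) (hΛmono : Monotone Λ)
    {c : ℝ} {φ : Ω → ℝ} (hφ : ∀ ω, 0 ≤ φ ω) {g : Ω → Fin N → ℝ} (hg : g ∈ G)
    (hA : (fun ω => Λ (fun i => c - φ ω + g ω i)) ∈ A) :
    rho A G Λ 0 ≤ ((N * c : ℝ) : EReal) := by
  have hconst : (fun ω => Λ (fun i => (fun _ => c) i + (0 : Ω → Fin N → ℝ) ω i + g ω i)) ∈ A :=
    hAmono _ _ hA fun ω => hΛmono fun i => by simp [hφ ω]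
  simpa using rho_le_sum hg hconst

end RiskMeasure

theorem stmt_14_general {Ω : Type*} {N : ℕ} (hN : 0 < N)
    (Z : Ω → ℝ)
    (A : Set (Ω → ℝ)) (G : Set (Ω → Fin N → ℝ))
    (hAmono : ∀ x y : Ω → ℝ, y ∈ A → (∀ ω, y ω ≤ x ω) → x ∈ A)
    (Λ : (Fin N → ℝ) → ℝ) (hΛmono : Monotone Λ)
    (γ : ℝ)
    (hnoarb : ∀ m : Fin N → ℝ, (∑ i, m i) < γ →
      ¬ ∃ g ∈ G, (fun ω => Λ (fun i => m i + g ω i)) ∈ A)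
    (hassA : ∀ n : ℕ, 0 < n → ∃ z : ℝ, 0 ≤ z ∧ ∃ g ∈ G,
      (fun ω => Λ (fun i => γ / N + 1 / n - n * max (Z ω - z) 0 + g ω i)) ∈ A) :
    rho A G Λ 0 = (γ : EReal) := by
  refine le_antisymm (EReal.le_of_forall_lt_iff_le.1 fun c hc => ?_)
    (le_rho_zero_of_noArbitrage γ hnoarb)
  have hNpos : (0 : ℝ) < N := Nat.cast_pos.2 hN
  obtain ⟨n, hn⟩ := exists_nat_one_div_lt
    (div_pos (sub_pos.2 (EReal.coe_lt_coe_iff.1 hc)) hNpos)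
  obtain ⟨z, -, g, hg, hA⟩ := hassA (n + 1) n.succ_pos
  have hφ : ∀ ω, 0 ≤ ((n + 1 : ℕ) : ℝ) * max (Z ω - z) 0 := fun ω => by positivity
  calc rho A G Λ 0 ≤ ((N * (γ / N + 1 / (n + 1 : ℕ)) : ℝ) : EReal) :=
        rho_zero_le_of_const_sub_nonneg_mem hAmono hΛmono hφ hg hA
    _ ≤ c := by
        refine EReal.coe_le_coe_iff.2 ?_
        rw [lt_div_iff₀ hNpos] at hn
        rw [mul_add, mul_div_cancel₀ _ hNpos.ne']
        push_cast
        linarith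

/-- absence of regulatory arbitrage at level γ together with
Assumption (A) implies ρ(0) = γ. -/
theorem stmt_14 {Ω : Type*} [MetricSpace Ω] [Nonempty Ω] {N : ℕ} (hN : 0 < N)
    (Z : Ω → ℝ) (hZc : Continuous Z) (hZ1 : ∀ ω, 1 ≤ Z ω)
    (hZcomp : ∀ z : ℝ, IsCompact {ω | Z ω ≤ z})
    (A : Set (Ω → ℝ)) (G : Set (Ω → Fin N → ℝ))
    (hAmono : ∀ x y : Ω → ℝ, y ∈ A → (∀ ω, y ω ≤ x ω) → x ∈ A)
    (h0A : (0 : Ω → ℝ) ∈ A) (h0G : (0 : Ω → Fin N → ℝ) ∈ G)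
    (Λ : (Fin N → ℝ) → ℝ) (hΛmono : Monotone Λ)
    (hΛconc : ConcaveOn ℝ Set.univ Λ) (hΛ0 : Λ 0 = 0)
    (hCconv : Convex ℝ {X : Ω → Fin N → ℝ | ∃ g ∈ G, (fun ω => Λ (X ω + g ω)) ∈ A})
    (γ : ℝ) (hγ : γ ≤ 0)
    (hnoarb : ∀ m : Fin N → ℝ, (∑ i, m i) < γ →
      ¬ ∃ g ∈ G, (fun ω => Λ (fun i => m i + g ω i)) ∈ A)
    (hassA : ∀ n : ℕ, 0 < n → ∃ z : ℝ, 0 ≤ z ∧ ∃ g ∈ G,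
      (fun ω => Λ (fun i => γ / N + 1 / n - n * max (Z ω - z) 0 + g ω i)) ∈ A) :
    rho A G Λ 0 = (γ : EReal) :=
  stmt_14_general hN Z A G hAmono Λ hΛmono γ hnoarb hassA
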